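/- arXiv:1912.02755 — 8 statements merged into one kernel-verified Lean document; each statement's English description precedes it below -/
import Mathlib

section
/- Let U be a nonnegative random variable and C ≥ 0 a constant such that P(U > t) ~ C/√t as t → ∞ (i.e. √t · P(U > t) → C). Then lim_{λ → 0⁺} λ^{-1/2} E[1 - e^{-λU}] = C√π. -/
/-!
The layer-cake formula turns `E[1 - e^{-λU}]` into `λ ∫₀^∞ P(U > t) e^{-λt} dt`, so the claim is an
Abelian theorem for the Laplace transform: if `f` is bounded and `t^α f(t) → C` with `0 ≤ α < 1`,
then `λ^{1-α} ∫₀^∞ f(t) e^{-λt} dt → C Γ(1-α)`. The substitution `t = x/λ` rewrites the left side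
as `∫₀^∞ (x/λ)^α f(x/λ) · x^{-α} e^{-x} dx`, whose first factor is bounded and tends to `C`
pointwise, so dominated convergence applies; finally `Γ(1/2) = √π`.
-/

open MeasureTheory Real Filter Set Topology

lemma exists_norm_rpow_mul_le_of_tendsto {f : ℝ → ℝ} {α C M : ℝ} (hα : 0 ≤ α)
    (hfM : ∀ t, ‖f t‖ ≤ M) (hf : Tendsto (fun t => t ^ α * f t) atTop (𝓝 C)) :
    ∃ K, ∀ t, 0 ≤ t → ‖t ^ α * f t‖ ≤ K := by
  obtain ⟨T, hT⟩ := eventually_atTop.1 (hf.norm.eventually (gt_mem_nhds (lt_add_one ‖C‖)))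
  refine ⟨max (‖C‖ + 1) (T ^ α * M), fun t ht => ?_⟩
  rcases le_total T t with hTt | htT
  · exact le_max_of_le_left (hT t hTt).le
  · refine le_max_of_le_right ?_
    rw [norm_mul, norm_of_nonneg (rpow_nonneg ht α)]
    exact mul_le_mul (rpow_le_rpow ht htT hα) (hfM t) (norm_nonneg _)
      (rpow_nonneg (ht.trans htT) α)

lemma rpow_mul_integral_mul_exp_neg_mul_eq (f : ℝ → ℝ) (α : ℝ) {l : ℝ} (hl : 0 < l) :
    l ^ (1 - α) * ∫ t in Ioi 0, f t * exp (-(l * t)) =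
      ∫ x in Ioi 0, (x / l) ^ α * f (x / l) * (exp (-x) * x ^ (1 - α - 1)) := by
  have hsubst := integral_comp_mul_left_Ioi (fun t => f t * exp (-(l * t))) 0 (inv_pos.2 hl)
  simp only [mul_zero, inv_inv, smul_eq_mul, mul_inv_cancel_left₀ hl.ne'] at hsubst
  calc l ^ (1 - α) * ∫ t in Ioi 0, f t * exp (-(l * t))
      = l ^ (1 - α) * (l⁻¹ * ∫ x in Ioi 0, f (l⁻¹ * x) * exp (-x)) := by
        rw [hsubst, inv_mul_cancel_left₀ hl.ne']
    _ = ∫ x in Ioi 0, l ^ (1 - α) * l⁻¹ * (f (l⁻¹ * x) * exp (-x)) := by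
        rw [integral_const_mul, mul_assoc]
    _ = _ := setIntegral_congr_fun measurableSet_Ioi fun x (hx : 0 < x) => by
        rw [div_rpow hx.le hl.le, rpow_sub hl, rpow_one, show 1 - α - 1 = -α by ring,
          rpow_neg hx.le, inv_mul_eq_div]
        field_simp

theorem tendsto_rpow_mul_integral_mul_exp_neg_mul_of_tendsto {f : ℝ → ℝ} {α C M : ℝ}
    (hα0 : 0 ≤ α) (hα1 : α < 1) (hf_meas : Measurable f) (hfM : ∀ t, ‖f t‖ ≤ M)
    (hf : Tendsto (fun t => t ^ α * f t) atTop (𝓝 C)) :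
    Tendsto (fun l => l ^ (1 - α) * ∫ t in Ioi 0, f t * exp (-(l * t))) (𝓝[>] 0)
      (𝓝 (C * Gamma (1 - α))) := by
  obtain ⟨K, hK⟩ := exists_norm_rpow_mul_le_of_tendsto hα0 hfM hf
  rw [Gamma_eq_integral (sub_pos.2 hα1), ← integral_const_mul]
  refine (tendsto_integral_filter_of_dominated_convergence
    (F := fun l x => (x / l) ^ α * f (x / l) * (exp (-x) * x ^ (1 - α - 1)))
    (fun x => K * (exp (-x) * x ^ (1 - α - 1))) ?_ ?_
    ((GammaIntegral_convergent (sub_pos.2 hα1)).const_mul K) ?_).congr' ?_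
  · exact Eventually.of_forall fun l => by fun_prop
  · filter_upwards [self_mem_nhdsWithin] with l hl
    filter_upwards [ae_restrict_mem measurableSet_Ioi] with x (hx : 0 < x)
    have hγ : 0 ≤ exp (-x) * x ^ (1 - α - 1) := by positivity
    rw [norm_mul, norm_of_nonneg hγ]
    exact mul_le_mul_of_nonneg_right (hK _ (div_pos hx hl).le) hγ
  · filter_upwards [ae_restrict_mem measurableSet_Ioi] with x (hx : 0 < x)
    have hxl : Tendsto (fun l => x / l) (𝓝[>] 0) atTop := by
      simpa only [div_eq_mul_inv] using tendsto_inv_nhdsGT_zero.const_mul_atTop hx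
    exact (hf.comp hxl).mul_const _
  · filter_upwards [self_mem_nhdsWithin] with l hl
    exact (rpow_mul_integral_mul_exp_neg_mul_eq f α hl).symm

lemma measurable_toReal_measure_setOf_lt {Ω : Type*} [MeasurableSpace Ω] (μ : Measure Ω)
    (U : Ω → ℝ) : Measurable fun t : ℝ => (μ {ω | t < U ω}).toReal :=
  (Antitone.measurable (f := fun t : ℝ => μ {ω | t < U ω}) fun _ _ hst =>
    measure_mono fun _ h => hst.trans_lt h).ennreal_toReal

lemma integral_one_sub_exp_neg_mul_eq {Ω : Type*} [MeasurableSpace Ω] (μ : Measure Ω)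
    [IsFiniteMeasure μ] {U : Ω → ℝ} (hU : AEMeasurable U μ) (hU0 : 0 ≤ᵐ[μ] U) {l : ℝ}
    (hl : 0 < l) :
    ∫ ω, (1 - exp (-(l * U ω))) ∂μ =
      l * ∫ t in Ioi 0, (μ {ω | t < U ω}).toReal * exp (-(l * t)) := by
  have hprim : ∀ x, ∫ t in (0:ℝ)..x, l * exp (-(l * t)) = 1 - exp (-(l * x)) := fun x => by
    rw [intervalIntegral.integral_const_mul,
      intervalIntegral.mul_integral_comp_mul_left (f := fun t => exp (-t))]
    simp [intervalIntegral.integral_comp_neg]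
  have hlayer := lintegral_comp_eq_lintegral_meas_lt_mul μ hU0 hU
    (fun t _ => (by fun_prop : Continuous fun t => l * exp (-(l * t))).intervalIntegrable 0 t)
    (Eventually.of_forall fun t => by positivity)
  simp only [hprim] at hlayer
  have hlhs_nonneg : 0 ≤ᵐ[μ] fun ω => 1 - exp (-(l * U ω)) := by
    filter_upwards [hU0] with ω hω
    exact sub_nonneg.2 (exp_le_one_iff.2 (neg_nonpos.2 (mul_nonneg hl.le hω)))
  have hlhs_meas : AEMeasurable (fun ω => 1 - exp (-(l * U ω))) μ :=
    (by fun_prop : Measurable fun u => 1 - exp (-(l * u))).comp_aemeasurable hU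
  have htail_meas := measurable_toReal_measure_setOf_lt μ U
  have hrhs_meas : Measurable fun t => l * ((μ {ω | t < U ω}).toReal * exp (-(l * t))) := by
    fun_prop
  rw [← integral_const_mul,
    integral_eq_lintegral_of_nonneg_ae hlhs_nonneg hlhs_meas.aestronglyMeasurable,
    integral_eq_lintegral_of_nonneg_ae (Eventually.of_forall fun t => by positivity)
      hrhs_meas.aestronglyMeasurable, hlayer]
  congr 1
  refine lintegral_congr fun t => ?_
  rw [mul_left_comm, ENNReal.ofReal_mul ENNReal.toReal_nonneg,
    ENNReal.ofReal_toReal (measure_ne_top μ _)]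

theorem stmt1_general {Ω : Type*} [MeasurableSpace Ω] (μ : Measure Ω) [IsProbabilityMeasure μ]
    (U : Ω → ℝ) (hU : Measurable U) (hU0 : ∀ ω, 0 ≤ U ω) (C : ℝ)
    (htail : Tendsto (fun t => Real.sqrt t * (μ {ω | t < U ω}).toReal) atTop (nhds C)) :
    Tendsto (fun l : ℝ => l ^ (-(1:ℝ)/2) * ∫ ω, (1 - Real.exp (-(l * U ω))) ∂μ)
      (nhdsWithin 0 (Ioi 0)) (nhds (C * Real.sqrt π)) := by
  have hlaplace := tendsto_rpow_mul_integral_mul_exp_neg_mul_of_tendsto (α := 1 / 2) (M := 1)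
    (by norm_num) (by norm_num) (measurable_toReal_measure_setOf_lt μ U)
    (fun t => (norm_of_nonneg ENNReal.toReal_nonneg).trans_le measureReal_le_one)
    (by simpa only [sqrt_eq_rpow] using htail)
  rw [show (1 : ℝ) - 1 / 2 = 1 / 2 by norm_num, Gamma_one_half_eq] at hlaplace
  refine hlaplace.congr' ?_
  filter_upwards [self_mem_nhdsWithin] with l (hl : 0 < l)
  rw [integral_one_sub_exp_neg_mul_eq μ hU.aemeasurable (Eventually.of_forall hU0) hl,
    ← mul_assoc, ← rpow_add_one hl.ne']
  norm_num

theorem stmt1 {Ω : Type*} [MeasurableSpace Ω] (μ : Measure Ω) [IsProbabilityMeasure μ]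
    (U : Ω → ℝ) (hU : Measurable U) (hU0 : ∀ ω, 0 ≤ U ω) (C : ℝ) (hC : 0 ≤ C)
    (htail : Tendsto (fun t => Real.sqrt t * (μ {ω | t < U ω}).toReal) atTop (nhds C)) :
    Tendsto (fun l : ℝ => l ^ (-(1:ℝ)/2) * ∫ ω, (1 - Real.exp (-(l * U ω))) ∂μ)
      (nhdsWithin 0 (Ioi 0)) (nhds (C * Real.sqrt π)) :=
  stmt1_general μ U hU hU0 C htail
end

section
/- Let F : (0,∞) → ℝ be nondecreasing, suppose F(t) is differentiable on (1,∞) with derivative p(t) := F'(t) which is nonnegative and nonincreasing, and suppose F(t) - 2C√t = O_ε(√t) in the sense that for every ε > 0 there is t_ε with |F(t) - 2C√t| ≤ ε√t for all t ≥ t_ε, where C > 0. Then lim_{t→∞} √t · p(t) = C. -/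
open MeasureTheory Real Filter Set

lemma mvt_bounds_aux (F p : ℝ → ℝ)
    (hderiv : ∀ t ∈ Ioi (1:ℝ), HasDerivAt F (p t) t)
    (hpanti : AntitoneOn p (Ioi (1:ℝ)))
    {a b : ℝ} (ha : 1 < a) (hab : a < b) :
    p b * (b - a) ≤ F b - F a ∧ F b - F a ≤ p a * (b - a) := by
  have hcont : ContinuousOn F (Icc a b) := fun x hx =>
    ((hderiv x (lt_of_lt_of_le ha hx.1)).continuousAt).continuousWithinAt
  have hd : ∀ x ∈ Ioo a b, HasDerivAt F (p x) x := fun x hx => hderiv x (ha.trans hx.1)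
  obtain ⟨c, hc, hceq⟩ := exists_hasDerivAt_eq_slope F p hab hcont hd
  have hca : 1 < c := ha.trans hc.1
  have h1 : p b ≤ p c := hpanti (mem_Ioi.2 hca) (mem_Ioi.2 (ha.trans hab)) hc.2.le
  have h2 : p c ≤ p a := hpanti (mem_Ioi.2 ha) (mem_Ioi.2 hca) hc.1.le
  have hba : (0:ℝ) < b - a := by linarith
  have key : p c * (b - a) = F b - F a := by
    rw [hceq]; field_simp
  constructor
  · linarith [mul_le_mul_of_nonneg_right h1 hba.le]
  · linarith [mul_le_mul_of_nonneg_right h2 hba.le]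

set_option maxHeartbeats 1000000 in
theorem stmt2 (F p : ℝ → ℝ) (C : ℝ) (hC : 0 < C)
    (hmono : MonotoneOn F (Ioi (0:ℝ)))
    (hderiv : ∀ t ∈ Ioi (1:ℝ), HasDerivAt F (p t) t)
    (hp0 : ∀ t ∈ Ioi (1:ℝ), 0 ≤ p t)
    (hpanti : AntitoneOn p (Ioi (1:ℝ)))
    (hasymp : ∀ ε > (0:ℝ), ∃ tε : ℝ, ∀ t ≥ tε, |F t - 2 * C * Real.sqrt t| ≤ ε * Real.sqrt t) :
    Tendsto (fun t => Real.sqrt t * p t) atTop (nhds C) := by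
  rw [Metric.tendsto_atTop]
  intro δ hδ
  obtain ⟨η, hη0, hη2, hηδ⟩ : ∃ η : ℝ, 0 < η ∧ η ≤ 1/2 ∧ (C+3) * η ≤ δ / 2 := by
    refine ⟨min (1/2) (δ / (2 * (C+3))), lt_min (by norm_num) (by positivity),
      min_le_left _ _, ?_⟩
    have h := min_le_right (1/2) (δ / (2 * (C+3)))
    rw [le_div_iff₀ (by positivity)] at h
    linarith [h]
  obtain ⟨tε, htε⟩ := hasymp (η^2) (by positivity)
  refine ⟨2 * max tε 0 + 4, fun t ht => ?_⟩
  show dist (Real.sqrt t * p t) C < δ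
  have hmax0 := le_max_right tε (0:ℝ)
  have hmaxt := le_max_left tε (0:ℝ)
  have ht4 : (4:ℝ) ≤ t := by linarith
  have ht0 : (0:ℝ) ≤ t := by linarith
  have httε : tε ≤ t := by linarith
  have hηtnn : (0:ℝ) ≤ η * t := mul_nonneg hη0.le ht0
  have hηt : (0:ℝ) < η * t := mul_pos hη0 (by linarith)
  have hhalf : η * t ≤ 1/2 * t := mul_le_mul_of_nonneg_right hη2 ht0
  have htmε : tε ≤ t - η * t := by linarith
  have ht1 : (1:ℝ) < t := by linarith
  have htm1 : (1:ℝ) < t - η * t := by linarith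
  set s := Real.sqrt t with hs
  set sp := Real.sqrt (t + η * t) with hsp
  set sm := Real.sqrt (t - η * t) with hsm
  have hs2 : s ^ 2 = t := Real.sq_sqrt ht0
  have hsp2 : sp ^ 2 = t + η * t := Real.sq_sqrt (by linarith)
  have hsm2 : sm ^ 2 = t - η * t := Real.sq_sqrt (by linarith)
  have hs1 : (2:ℝ) ≤ s := by
    have h : Real.sqrt 4 ≤ s := Real.sqrt_le_sqrt ht4
    rwa [show (4:ℝ) = 2^2 by norm_num, Real.sqrt_sq (by norm_num)] at h
  have hsnn : (0:ℝ) ≤ s := by linarith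
  have hsmnn : (0:ℝ) ≤ sm := Real.sqrt_nonneg _
  have hspnn : (0:ℝ) ≤ sp := Real.sqrt_nonneg _
  have hssp : s ≤ sp := Real.sqrt_le_sqrt (by linarith)
  have hsms : sm ≤ s := Real.sqrt_le_sqrt (by linarith)
  have hη2tnn : (0:ℝ) ≤ η^2 * t := by positivity
  have hηηt : η * (η * t) ≤ 1 * (η * t) :=
    mul_le_mul_of_nonneg_right (by linarith : η ≤ 1) hηtnn
  have hspub : sp ≤ (1 + η) * s := by
    have h := Real.sqrt_le_sqrt (show t + η*t ≤ (1+η)^2*t by linarith [hηtnn, hη2tnn])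
    rwa [Real.sqrt_mul (sq_nonneg _), Real.sqrt_sq (by linarith : (0:ℝ) ≤ 1+η)] at h
  have hsmlb : (1 - η) * s ≤ sm := by
    have h := Real.sqrt_le_sqrt (show (1-η)^2 * t ≤ t - η*t by linarith [hηηt])
    rwa [Real.sqrt_mul (sq_nonneg _), Real.sqrt_sq (by linarith : (0:ℝ) ≤ 1-η)] at h
  -- MVT bounds
  obtain ⟨_, hup⟩ := mvt_bounds_aux F p hderiv hpanti ht1 (show t < t + η * t by linarith)
  obtain ⟨hlo, _⟩ := mvt_bounds_aux F p hderiv hpanti htm1 (show t - η * t < t by linarith)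
  -- asymptotic bounds
  have hA := htε t httε
  have hAp := htε (t + η * t) (by linarith)
  have hAm := htε (t - η * t) htmε
  rw [← hs] at hA
  rw [← hsp] at hAp
  rw [← hsm] at hAm
  rw [abs_le] at hA hAp hAm
  -- lower bound: η t p t ≥ 2C(sp - s) - η²(sp + s)
  have h1 : 2*C*(sp - s) - η^2*(sp + s) ≤ η * t * p t := by
    linarith [hup, hAp.1, hA.2]
  -- upper bound: η t p t ≤ 2C(s - sm) + 2η² s
  have h1' : η * t * p t ≤ 2*C*(s - sm) + 2*η^2*s := by
    linarith [hlo, hA.1, hAm.2, mul_le_mul_of_nonneg_left hsms (sq_nonneg η)]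
  have e1 : (sp - s) * (sp + s) = η * t := by linear_combination hsp2 - hs2
  have e2 : (s - sm) * (s + sm) = η * t := by linear_combination hs2 - hsm2
  have h3 : η * t ≤ (2 + η) * (s * (sp - s)) := by
    have h := mul_le_mul_of_nonneg_left hspub (show (0:ℝ) ≤ sp - s by linarith)
    linarith [h, e1]
  have h3' : (2 - η) * (s * (s - sm)) ≤ η * t := by
    have h := mul_le_mul_of_nonneg_left hsmlb (show (0:ℝ) ≤ s - sm by linarith)
    linarith [h, e2]
  have hs2η : η * s^2 = η * t := by rw [hs2]
  have hs2η2 : η^2 * s^2 = η^2 * t := by rw [hs2]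
  have hs2η3 : η^3 * s^2 = η^3 * t := by rw [hs2]
  have h4 : s * (sp + s) ≤ (2 + η) * t := by
    have h := mul_le_mul_of_nonneg_left hspub hsnn
    linarith [h, hs2, hs2η]
  have h5 : s * (2*C*(sp - s) - η^2*(sp + s)) ≤ s * (η * t * p t) :=
    mul_le_mul_of_nonneg_left h1 hsnn
  have h5' : s * (η * t * p t) ≤ s * (2*C*(s - sm) + 2*η^2*s) :=
    mul_le_mul_of_nonneg_left h1' hsnn
  -- lower final
  have hlow : C - (C+3) * η ≤ s * p t := by
    have hq1 : 2*C*(η*t) ≤ 2*C*((2+η)*(s*(sp - s))) :=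
      mul_le_mul_of_nonneg_left h3 (by positivity)
    have hq2 : ((2+η)*η^2)*(s*(sp + s)) ≤ ((2+η)*η^2)*((2+η)*t) :=
      mul_le_mul_of_nonneg_left h4 (by positivity)
    have hq3 : (2+η)*(s*(2*C*(sp - s) - η^2*(sp + s))) ≤ (2+η)*(s*(η * t * p t)) :=
      mul_le_mul_of_nonneg_left h5 (by linarith)
    have hpoly : 0 ≤ (η^2*t)*(C + 2 - η - η^2 + η*C) := by
      have hd1 : (0:ℝ) ≤ η * C := mul_nonneg hη0.le hC.le
      have hd2 : η * η ≤ η * (1/2) := mul_le_mul_of_nonneg_left hη2 hη0.le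
      have hd3 : (0:ℝ) ≤ C + 2 - η - η^2 + η*C := by linarith [hd1, hd2, hη2, hC.le]
      exact mul_nonneg hη2tnn hd3
    have hmul : (2 + η) * (η * t) * (C - (C+3) * η) ≤ (2 + η) * (η * t) * (s * p t) := by
      linarith [hq1, hq2, hq3, hpoly]
    exact le_of_mul_le_mul_left hmul (by positivity)
  have hhigh : s * p t ≤ C + (C+3) * η := by
    have hq1 : 2*C*((2-η)*(s*(s - sm))) ≤ 2*C*(η*t) :=
      mul_le_mul_of_nonneg_left h3' (by positivity)
    have hq3 : (2-η)*(s*(η * t * p t)) ≤ (2-η)*(s*(2*C*(s - sm) + 2*η^2*s)) :=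
      mul_le_mul_of_nonneg_left h5' (by linarith)
    have hpoly : 0 ≤ (η^2*t)*(C + 2 - (C+1)*η) := by
      have hd2 : (C+1) * η ≤ (C+1) * (1/2) :=
        mul_le_mul_of_nonneg_left hη2 (by linarith)
      have hd3 : (0:ℝ) ≤ C + 2 - (C+1)*η := by linarith
      exact mul_nonneg hη2tnn hd3
    have hmul : (2 - η) * (η * t) * (s * p t) ≤ (2 - η) * (η * t) * (C + (C+3) * η) := by
      linarith [hq1, hq3, hpoly, hs2, hs2η2, hs2η3]
    have hpos : (0:ℝ) < (2 - η) * (η * t) :=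
      mul_pos (by linarith) hηt
    exact le_of_mul_le_mul_left hmul hpos
  rw [Real.dist_eq, abs_lt]
  constructor
  · linarith [hηδ, hlow]
  · linarith [hηδ, hhigh]
end

section
/- Let U and V be independent nonnegative random variables, C > 0, q > 0. Suppose lim_{t→∞} t^q P(U > t) = C and E[V^p] < ∞ for some p > q. Then lim_{t→∞} t^q P(UV > t) = C · E[V^q]. -/
open MeasureTheory Real Filter Set ProbabilityTheory
open scoped ENNReal

theorem stmt3 {Ω : Type*} [MeasurableSpace Ω] (μ : Measure Ω) [IsProbabilityMeasure μ]
    (U V : Ω → ℝ) (hU : Measurable U) (hV : Measurable V)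
    (hU0 : ∀ ω, 0 ≤ U ω) (hV0 : ∀ ω, 0 ≤ V ω)
    (hindep : IndepFun U V μ)
    (C q p : ℝ) (hC : 0 < C) (hq : 0 < q) (hpq : q < p)
    (htail : Tendsto (fun t => t ^ q * (μ {ω | t < U ω}).toReal) atTop (nhds C))
    (hVp : Integrable (fun ω => V ω ^ p) μ) :
    Tendsto (fun t => t ^ q * (μ {ω | t < U ω * V ω}).toReal) atTop
      (nhds (C * ∫ ω, V ω ^ q ∂μ)) := by
  have hUae : AEMeasurable U μ := hU.aemeasurable
  have hVae : AEMeasurable V μ := hV.aemeasurable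
  set μU := μ.map U with hμU
  set μV := μ.map V with hμV
  have hPU : IsProbabilityMeasure μU := Measure.isProbabilityMeasure_map hUae
  have hPV : IsProbabilityMeasure μV := Measure.isProbabilityMeasure_map hVae
  have hmap : μ.map (fun ω => (U ω, V ω)) = μU.prod μV :=
    (indepFun_iff_map_prod_eq_prod_map_map hUae hVae).mp hindep
  have hV0' : ∀ᵐ v ∂μV, 0 ≤ v := by
    rw [hμV, ae_map_iff hVae measurableSet_Ici]
    exact Filter.Eventually.of_forall hV0
  have hset : ∀ t : ℝ, MeasurableSet {x : ℝ × ℝ | t < x.1 * x.2} := fun t =>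
    measurableSet_lt measurable_const (measurable_fst.mul measurable_snd)
  -- the tail function of U
  set F : ℝ → ℝ := fun s => (μ {ω | s < U ω}).toReal with hFdef
  have hFeq : ∀ s : ℝ, (μU {u | s < u}).toReal = F s := by
    intro s
    have : μU {u | s < u} = μ {ω | s < U ω} := by
      rw [hμU]
      exact Measure.map_apply hU (measurableSet_Ioi : MeasurableSet (Ioi s))
    rw [this]
  have hF0 : ∀ s, 0 ≤ F s := fun s => ENNReal.toReal_nonneg
  have hF1 : ∀ s, F s ≤ 1 := by
    intro s
    have h := prob_le_one (μ := μ) (s := {ω | s < U ω})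
    calc (μ {ω | s < U ω}).toReal ≤ (1 : ℝ≥0∞).toReal :=
          ENNReal.toReal_mono ENNReal.one_ne_top h
      _ = 1 := by simp
  -- disintegration via independence
  have key : ∀ t : ℝ, t ^ q * (μ {ω | t < U ω * V ω}).toReal
      = ∫ v, t ^ q * (μU {u | t < u * v}).toReal ∂μV := by
    intro t
    have hm : Measurable fun v => μU {u : ℝ | t < u * v} :=
      measurable_measure_prodMk_right (μ := μU) (hset t)
    have h1 : μ {ω | t < U ω * V ω} = (μU.prod μV) {x : ℝ × ℝ | t < x.1 * x.2} := by
      rw [← hmap, Measure.map_apply (hU.prodMk hV) (hset t)]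
      rfl
    have h2 : (μU.prod μV) {x : ℝ × ℝ | t < x.1 * x.2}
        = ∫⁻ v, μU {u | t < u * v} ∂μV := by
      rw [Measure.prod_apply_symm (hset t)]
      rfl
    rw [h1, h2, ← MeasureTheory.integral_toReal hm.aemeasurable
      (Filter.Eventually.of_forall fun v => measure_lt_top μU _), integral_const_mul]
  -- measurability of powers
  have hmq : Measurable fun v : ℝ => v ^ q := by fun_prop
  have hmp : Measurable fun v : ℝ => v ^ p := by fun_prop
  -- value of the limit integral
  have hlim_int : ∫ v, C * v ^ q ∂μV = C * ∫ ω, V ω ^ q ∂μ := by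
    rw [integral_const_mul, hμV, integral_map hVae hmq.aestronglyMeasurable]
  -- bound from the tail hypothesis
  have hev : ∀ᶠ t in atTop, t ^ q * F t ≤ C + 1 :=
    htail.eventually (eventually_le_nhds (lt_add_one C))
  obtain ⟨t0, ht0⟩ := eventually_atTop.mp hev
  set T : ℝ := max t0 1 with hTdef
  have hT1 : (1 : ℝ) ≤ T := le_max_right _ _
  have hT0 : (0 : ℝ) ≤ T := le_trans zero_le_one hT1
  set K : ℝ := max (C + 1) (T ^ q) with hKdef
  have hK1 : C + 1 ≤ K := le_max_left _ _
  have hK2 : T ^ q ≤ K := le_max_right _ _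
  have hK0 : 0 ≤ K := le_trans (by linarith) hK1
  -- v^q ≤ 1 + v^p for v ≥ 0
  have hvq_le : ∀ v : ℝ, 0 ≤ v → v ^ q ≤ 1 + v ^ p := by
    intro v hv
    rcases le_total v 1 with h | h
    · have h1 : v ^ q ≤ 1 := Real.rpow_le_one hv h hq.le
      have h2 : 0 ≤ v ^ p := Real.rpow_nonneg hv p
      linarith
    · have h1 : v ^ q ≤ v ^ p := Real.rpow_le_rpow_of_exponent_le h hpq.le
      linarith
  -- integrability of the bound
  have hip : Integrable (fun v : ℝ => v ^ p) μV := by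
    rw [hμV, integrable_map_measure hmp.aestronglyMeasurable hVae]
    exact hVp
  have hbi : Integrable (fun v : ℝ => K * (1 + v ^ p)) μV :=
    ((integrable_const (1 : ℝ)).add hip).const_mul K
  -- rewrite the target using key
  have hfun : (fun t => t ^ q * (μ {ω | t < U ω * V ω}).toReal)
      = fun t => ∫ v, t ^ q * (μU {u | t < u * v}).toReal ∂μV := funext key
  rw [hfun, ← hlim_int]
  -- dominated convergence
  apply tendsto_integral_filter_of_dominated_convergence (fun v => K * (1 + v ^ p))
  · -- a.e. strong measurability
    filter_upwards with t
    exact ((measurable_measure_prodMk_right (μ := μU)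
      (hset t)).ennreal_toReal.const_mul _).aestronglyMeasurable
  · -- domination
    filter_upwards [eventually_ge_atTop T] with t ht
    filter_upwards [hV0'] with v hv
    have ht1 : (1 : ℝ) ≤ t := le_trans hT1 ht
    have ht0' : (0 : ℝ) ≤ t := le_trans zero_le_one ht1
    have hnn : 0 ≤ t ^ q * (μU {u | t < u * v}).toReal :=
      mul_nonneg (Real.rpow_nonneg ht0' q) ENNReal.toReal_nonneg
    rw [Real.norm_of_nonneg hnn]
    rcases hv.eq_or_lt with h0 | hvpos
    · -- v = 0
      have hs : {u : ℝ | t < u * v} = ∅ := by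
        ext u
        simp only [← h0, mul_zero, mem_setOf_eq, mem_empty_iff_false, iff_false, not_lt]
        linarith
      rw [hs]
      simp only [measure_empty, ENNReal.toReal_zero, mul_zero]
      have : 0 ≤ v ^ p := Real.rpow_nonneg hv p
      nlinarith
    · -- v > 0
      have hsetv : {u : ℝ | t < u * v} = {u : ℝ | t / v < u} := by
        ext u
        simp only [mem_setOf_eq]
        rw [div_lt_iff₀ hvpos]
      rw [hsetv, hFeq]
      have hvqnn : 0 ≤ v ^ q := Real.rpow_nonneg hv q
      have hvple : v ^ q ≤ 1 + v ^ p := hvq_le v hv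
      rcases le_or_gt T (t / v) with hcase | hcase
      · -- t/v large: use the tail bound
        have hFb : (t / v) ^ q * F (t / v) ≤ C + 1 :=
          ht0 _ (le_trans (le_max_left t0 1) hcase)
        have htv0 : 0 ≤ t / v := le_trans hT0 hcase
        have hts : t ^ q = v ^ q * (t / v) ^ q := by
          rw [← Real.mul_rpow hv htv0]
          congr 1
          field_simp
        have hc1 : t ^ q * F (t / v) = v ^ q * ((t / v) ^ q * F (t / v)) := by
          rw [hts]; ring
        rw [hc1]
        have h1 : v ^ q * ((t / v) ^ q * F (t / v)) ≤ v ^ q * (C + 1) :=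
          mul_le_mul_of_nonneg_left hFb hvqnn
        have h2 : v ^ q * (C + 1) ≤ v ^ q * K := by
          apply mul_le_mul_of_nonneg_left hK1 hvqnn
        nlinarith
      · -- t/v small: crude bound
        have hFle : F (t / v) ≤ 1 := hF1 _
        have htlt : t < T * v := (div_lt_iff₀ hvpos).mp hcase
        have htq : t ^ q ≤ T ^ q * v ^ q := by
          calc t ^ q ≤ (T * v) ^ q := Real.rpow_le_rpow ht0' htlt.le hq.le
            _ = T ^ q * v ^ q := Real.mul_rpow hT0 hv
        have hTqnn : 0 ≤ T ^ q := Real.rpow_nonneg hT0 q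
        have h1 : t ^ q * F (t / v) ≤ t ^ q := by
          have := mul_le_mul_of_nonneg_left hFle (Real.rpow_nonneg ht0' q)
          simpa using this
        nlinarith
  · exact hbi
  · -- pointwise limit
    filter_upwards [hV0'] with v hv
    rcases hv.eq_or_lt with h0 | hvpos
    · -- v = 0
      have hz : C * v ^ q = 0 := by
        rw [← h0, Real.zero_rpow hq.ne']; ring
      rw [hz]
      have heq : ∀ᶠ t in atTop, t ^ q * (μU {u | t < u * v}).toReal = 0 := by
        filter_upwards [eventually_ge_atTop (0 : ℝ)] with t ht
        have hs : {u : ℝ | t < u * v} = ∅ := by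
          ext u
          simp only [← h0, mul_zero, mem_setOf_eq, mem_empty_iff_false, iff_false, not_lt]
          linarith
        rw [hs]
        simp
      exact (tendsto_congr' heq).mpr tendsto_const_nhds
    · -- v > 0
      have hdiv : Tendsto (fun t : ℝ => t / v) atTop atTop :=
        tendsto_id.atTop_div_const hvpos
      have h1 : Tendsto (fun t => (t / v) ^ q * F (t / v)) atTop (nhds C) :=
        htail.comp hdiv
      have h2 : Tendsto (fun t => v ^ q * ((t / v) ^ q * F (t / v))) atTop
          (nhds (v ^ q * C)) := h1.const_mul _
      rw [mul_comm C (v ^ q)]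
      apply h2.congr'
      filter_upwards [eventually_ge_atTop (1 : ℝ)] with t ht1
      have ht0' : (0 : ℝ) ≤ t := le_trans zero_le_one ht1
      have hsetv : {u : ℝ | t < u * v} = {u : ℝ | t / v < u} := by
        ext u
        simp only [mem_setOf_eq]
        rw [div_lt_iff₀ hvpos]
      have htv0 : 0 ≤ t / v := div_nonneg ht0' hvpos.le
      have hts : t ^ q = v ^ q * (t / v) ^ q := by
        rw [← Real.mul_rpow hvpos.le htv0]
        congr 1
        field_simp
      rw [hsetv, hFeq, hts]
      ring
end

section
/- Let U and V be independent nonnegative random variables, C > 0, q > 0, t₀ > 0, and a > 1. If P(U > t) ≥ C t^{-q} for all t > t₀, then P(UV > t) ≥ C E[(V^q / a^q) · 1_{V ≤ a}] · t^{-q} for all t > a·t₀. -/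
open MeasureTheory Real Filter Set ProbabilityTheory

/-!
Condition on `V`: by independence, `P(UV > t)` is the average over `v = V ω` of `P(U v > t)`.
For `0 < v ≤ a` and `t > a t₀` we have `t / v ≥ t / a > t₀`, so the tail bound for `U` at level
`t / v` gives `P(U v > t) ≥ C (t / v)^(-q) = C t^(-q) v^q ≥ C t^(-q) v^q / a^q`; integrating in `v`
gives the claim.
-/

theorem ProbabilityTheory.IndepFun.measure_preimage_eq_lintegral {Ω β γ : Type*}
    [MeasurableSpace Ω] [MeasurableSpace β] [MeasurableSpace γ] {μ : Measure Ω} [IsFiniteMeasure μ]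
    {X : Ω → β} {Y : Ω → γ} (hX : Measurable X) (hY : Measurable Y) (h : IndepFun X Y μ)
    {s : Set (β × γ)} (hs : MeasurableSet s) :
    μ {ω | (X ω, Y ω) ∈ s} = ∫⁻ ω, μ {ω' | (X ω', Y ω) ∈ s} ∂μ := by
  have hmap := (indepFun_iff_map_prod_eq_prod_map_map hX.aemeasurable hY.aemeasurable).mp h
  calc μ {ω | (X ω, Y ω) ∈ s} = μ.map (fun ω ↦ (X ω, Y ω)) s :=
        (Measure.map_apply (hX.prodMk hY) hs).symm
    _ = ∫⁻ y, μ.map X ((fun x ↦ (x, y)) ⁻¹' s) ∂μ.map Y := by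
        rw [hmap, Measure.prod_apply_symm hs]
    _ = ∫⁻ ω, μ {ω' | (X ω', Y ω) ∈ s} ∂μ := by
        rw [lintegral_map (measurable_measure_prodMk_right hs) hY]
        congr with ω
        exact Measure.map_apply hX (measurable_prodMk_right hs)

theorem integral_le_toReal_lintegral {α : Type*} [MeasurableSpace α] {μ : Measure α}
    {f : α → ℝ} {g : α → ENNReal} (hg : ∫⁻ x, g x ∂μ ≠ ⊤) (hf₀ : ∀ x, 0 ≤ f x)
    (hfg : ∀ x, f x ≤ (g x).toReal) : ∫ x, f x ∂μ ≤ (∫⁻ x, g x ∂μ).toReal := by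
  refine (le_abs_self _).trans ((norm_integral_le_lintegral_norm f).trans ?_)
  refine ENNReal.toReal_mono hg (lintegral_mono fun x ↦ ?_)
  rw [Real.norm_of_nonneg (hf₀ x)]
  exact ENNReal.ofReal_le_of_le_toReal (hfg x)

theorem mul_rpow_le_measure_lt_mul {Ω : Type*} [MeasurableSpace Ω] {μ : Measure Ω}
    {U : Ω → ℝ} {C q t₀ t v : ℝ}
    (htail : ∀ s, t₀ < s → C * s ^ (-q) ≤ (μ {ω | s < U ω}).toReal)
    (ht : 0 ≤ t) (hv : 0 < v) (htv : t₀ < t / v) :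
    C * t ^ (-q) * v ^ q ≤ (μ {ω | t < U ω * v}).toReal := by
  have hset : {ω | t / v < U ω} = {ω | t < U ω * v} := by
    ext ω; simp [div_lt_iff₀ hv]
  have hscale : (t / v) ^ (-q) = t ^ (-q) * v ^ q := by
    rw [div_rpow ht hv.le, rpow_neg hv.le, div_eq_mul_inv, inv_inv]
  simpa [hset, hscale, mul_assoc] using htail _ htv

theorem mul_indicator_le_measure_lt_mul {Ω : Type*} [MeasurableSpace Ω] {μ : Measure Ω}
    {U : Ω → ℝ} {C q t₀ a t v : ℝ}
    (htail : ∀ s, t₀ < s → C * s ^ (-q) ≤ (μ {ω | s < U ω}).toReal)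
    (hC : 0 ≤ C) (hq : 0 < q) (ha : 1 ≤ a) (ht0 : 0 ≤ t) (ht : a * t₀ < t) (hv : 0 ≤ v) :
    C * t ^ (-q) * (Iic a).indicator (fun x ↦ x ^ q / a ^ q) v
      ≤ (μ {ω | t < U ω * v}).toReal := by
  by_cases hva : v ≤ a
  swap
  · simp [hva]
  obtain rfl | hv := hv.eq_or_lt
  · simp [indicator_of_mem (show (0:ℝ) ∈ Iic a from hva), zero_rpow hq.ne']
  have htv : t₀ < t / v := calc
    t₀ < t / a := (lt_div_iff₀ (by positivity)).mpr (by linarith)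
    _ ≤ t / v := div_le_div_of_nonneg_left ht0 hv hva
  calc C * t ^ (-q) * (Iic a).indicator (fun x ↦ x ^ q / a ^ q) v
      = C * t ^ (-q) * v ^ q / a ^ q := by simp [hva, mul_div_assoc]
    _ ≤ C * t ^ (-q) * v ^ q := div_le_self (by positivity) (one_le_rpow ha hq.le)
    _ ≤ (μ {ω | t < U ω * v}).toReal := mul_rpow_le_measure_lt_mul htail ht0 hv htv

theorem stmt5_general {Ω : Type*} [MeasurableSpace Ω] (μ : Measure Ω) [IsProbabilityMeasure μ]
    (U V : Ω → ℝ) (hU : Measurable U) (hV : Measurable V)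
    (hV0 : ∀ ω, 0 ≤ V ω)
    (hindep : IndepFun U V μ)
    (C q t₀ a : ℝ) (hC : 0 < C) (hq : 0 < q) (ht₀ : 0 < t₀) (ha : 1 < a)
    (htail : ∀ t : ℝ, t₀ < t → C * t ^ (-q) ≤ (μ {ω | t < U ω}).toReal) :
    ∀ t : ℝ, a * t₀ < t →
      C * (∫ ω, Set.indicator {ω | V ω ≤ a} (fun ω => V ω ^ q / a ^ q) ω ∂μ) * t ^ (-q)
        ≤ (μ {ω | t < U ω * V ω}).toReal := by
  intro t ht
  have ht0 : 0 ≤ t := (mul_pos (zero_lt_one.trans ha) ht₀).le.trans ht.le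
  have hprod : μ {ω | t < U ω * V ω} = ∫⁻ ω, μ {ω' | t < U ω' * V ω} ∂μ :=
    hindep.measure_preimage_eq_lintegral (s := {p : ℝ × ℝ | t < p.1 * p.2}) hU hV
      (measurableSet_lt measurable_const (measurable_fst.mul measurable_snd))
  rw [hprod]
  calc C * (∫ ω, {ω | V ω ≤ a}.indicator (fun ω ↦ V ω ^ q / a ^ q) ω ∂μ) * t ^ (-q)
      = ∫ ω, C * t ^ (-q) * (Iic a).indicator (fun x ↦ x ^ q / a ^ q) (V ω) ∂μ := by
        rw [integral_const_mul, mul_right_comm]; rfl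
    _ ≤ (∫⁻ ω, μ {ω' | t < U ω' * V ω} ∂μ).toReal :=
        integral_le_toReal_lintegral (hprod ▸ measure_ne_top μ _)
          (fun ω ↦ mul_nonneg (by positivity)
            (indicator_apply_nonneg fun _ ↦ div_nonneg (rpow_nonneg (hV0 ω) q) (by positivity)))
          (fun ω ↦ mul_indicator_le_measure_lt_mul htail hC.le hq ha.le ht0 ht (hV0 ω))

theorem stmt5 {Ω : Type*} [MeasurableSpace Ω] (μ : Measure Ω) [IsProbabilityMeasure μ]
    (U V : Ω → ℝ) (hU : Measurable U) (hV : Measurable V)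
    (hU0 : ∀ ω, 0 ≤ U ω) (hV0 : ∀ ω, 0 ≤ V ω)
    (hindep : IndepFun U V μ)
    (C q t₀ a : ℝ) (hC : 0 < C) (hq : 0 < q) (ht₀ : 0 < t₀) (ha : 1 < a)
    (htail : ∀ t : ℝ, t₀ < t → C * t ^ (-q) ≤ (μ {ω | t < U ω}).toReal) :
    ∀ t : ℝ, a * t₀ < t →
      C * (∫ ω, Set.indicator {ω | V ω ≤ a} (fun ω => V ω ^ q / a ^ q) ω ∂μ) * t ^ (-q)
        ≤ (μ {ω | t < U ω * V ω}).toReal :=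
  stmt5_general μ U V hU hV hV0 hindep C q t₀ a hC hq ht₀ ha htail
end

section
/- Let U be a nonnegative random variable and C > 0 with lim_{t→∞} t P(U > t) = C. Then lim_{λ → 0⁺} E[U e^{-λU}] / (-log λ) = C. -/
/-!
Write `g t = P(U > t)`. Since `u e^{-λu} = ∫₀ᵘ (e^{-λt} - λt e^{-λt}) dt` and both parts of
the integrand are nonnegative, the layer-cake formula gives
`E[U e^{-λU}] = ∫₀^∞ g(t) e^{-λt} dt - ∫₀^∞ g(t) λt e^{-λt} dt`.
As `g(t) ≤ M / t`, the second integral is at most `M`. In the first, `g(t)` lies between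
`(C ∓ ε) / t` beyond some `T`: the range `T ≤ t ≤ 1/λ` contributes at most
`(C + ε) log (1/(λT))` and the rest `O(1)`, while on `T ≤ t ≤ δ/λ`, where `e^{-λt} ≥ e^{-δ}`,
the integral is at least `(C - ε) e^{-δ} log (δ/(λT))`.
-/

open MeasureTheory Real Filter Set Topology

section ExponentialIntegrals

variable {l : ℝ}

lemma integral_exp_neg_mul (hl : l ≠ 0) (u : ℝ) :
    ∫ t in (0 : ℝ)..u, exp (-(l * t)) = (1 - exp (-(l * u))) / l := by
  have hderiv (x : ℝ) : HasDerivAt (fun t => -exp (-(l * t)) / l) (exp (-(l * x))) x := by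
    refine (((hasDerivAt_id' x).const_mul l).neg.exp.neg.div_const l).congr_deriv ?_
    simp only [Pi.neg_apply]
    field_simp
  rw [intervalIntegral.integral_eq_sub_of_hasDerivAt (fun x _ => hderiv x)
    ((by fun_prop : Continuous _).intervalIntegrable _ _)]
  simp only [mul_zero, neg_zero, exp_zero]
  ring

lemma integral_exp_neg_mul_sub_mul_mul_exp_neg_mul (u : ℝ) :
    ∫ t in (0 : ℝ)..u, (exp (-(l * t)) - l * t * exp (-(l * t))) = u * exp (-(l * u)) := by
  have hderiv (x : ℝ) : HasDerivAt (fun t => t * exp (-(l * t)))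
      (exp (-(l * x)) - l * x * exp (-(l * x))) x := by
    refine ((hasDerivAt_id' x).mul ((hasDerivAt_id' x).const_mul l).neg.exp).congr_deriv ?_
    simp only [Pi.neg_apply]
    ring
  rw [intervalIntegral.integral_eq_sub_of_hasDerivAt (fun x _ => hderiv x)
    ((by fun_prop : Continuous _).intervalIntegrable _ _)]
  simp

lemma lintegral_Ioi_ofReal_mul_exp_neg_mul {k : ℝ} (hk : 0 ≤ k) (hl : 0 < l) (a : ℝ) :
    ∫⁻ t in Ioi a, ENNReal.ofReal (k * exp (-(l * t))) =
      ENNReal.ofReal (k * exp (-(l * a)) / l) := by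
  have hint : IntegrableOn (fun t => exp (-(l * t))) (Ioi a) := by
    simpa using integrableOn_exp_mul_Ioi (neg_neg_of_pos hl) a
  have hval := integral_exp_mul_Ioi (neg_neg_of_pos hl) a
  simp only [neg_mul, div_neg] at hval
  rw [← ofReal_integral_eq_lintegral_ofReal (hint.const_mul k)
      (ae_of_all _ fun t => by positivity),
    integral_const_mul, hval, neg_div, neg_neg, mul_div_assoc]

lemma lintegral_Ioc_ofReal_div {c T Y : ℝ} (hc : 0 ≤ c) (hT : 0 < T) (hTY : T ≤ Y) :
    ∫⁻ t in Ioc T Y, ENNReal.ofReal (c / t) = ENNReal.ofReal (c * log (Y / T)) := by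
  have hint : IntegrableOn (fun t => c / t) (Ioc T Y) :=
    ((continuousOn_const.div continuousOn_id fun t ht =>
      (hT.trans_le ht.1).ne').integrableOn_Icc).mono_set Ioc_subset_Icc_self
  rw [← ofReal_integral_eq_lintegral_ofReal hint ((ae_restrict_iff' measurableSet_Ioc).2
    (ae_of_all _ fun t ht => div_nonneg hc (hT.trans ht.1).le)),
    ← intervalIntegral.integral_of_le hTY]
  simp only [div_eq_mul_inv c, intervalIntegral.integral_const_mul,
    integral_inv_of_pos hT (hT.trans_le hTY)]

end ExponentialIntegrals

lemma tendsto_neg_log_nhdsGT_zero : Tendsto (fun l => -log l) (𝓝[>] 0) atTop :=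
  tendsto_neg_atBot_atTop.comp tendsto_log_nhdsGT_zero

lemma tendsto_mul_log_div_add_div_neg_log (a b : ℝ) {k : ℝ} (hk : 0 < k) :
    Tendsto (fun l => (a * log (k / l) + b) / -log l) (𝓝[>] 0) (𝓝 a) := by
  have hlim := (tendsto_const_nhds (x := a)).add
    ((tendsto_const_nhds (x := a * log k + b)).div_atTop tendsto_neg_log_nhdsGT_zero)
  rw [add_zero] at hlim
  refine hlim.congr' ?_
  filter_upwards [self_mem_nhdsWithin, tendsto_neg_log_nhdsGT_zero.eventually_gt_atTop 0]
    with l (hl : 0 < l) hL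
  have : log l ≠ 0 := by linarith
  rw [log_div hk.ne' hl.ne']
  field_simp
  ring

section Abelian

variable {g : ℝ → ℝ} {l : ℝ}

lemma lintegral_ofReal_mul_exp_neg_mul_ne_top (hg1 : ∀ t, g t ≤ 1) (hl : 0 < l) :
    ∫⁻ t in Ioi 0, ENNReal.ofReal (g t * exp (-(l * t))) ≠ ⊤ := by
  refine ne_of_lt ?_
  calc ∫⁻ t in Ioi 0, ENNReal.ofReal (g t * exp (-(l * t)))
      ≤ ∫⁻ t in Ioi 0, ENNReal.ofReal (1 * exp (-(l * t))) :=
        setLIntegral_mono' measurableSet_Ioi fun t _ =>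
          ENNReal.ofReal_le_ofReal (mul_le_mul_of_nonneg_right (hg1 t) (exp_pos _).le)
    _ = ENNReal.ofReal (1 * exp (-(l * 0)) / l) :=
        lintegral_Ioi_ofReal_mul_exp_neg_mul zero_le_one hl 0
    _ < ⊤ := ENNReal.ofReal_lt_top

lemma lintegral_ofReal_mul_mul_exp_neg_mul_le {M : ℝ} (hM : 0 ≤ M)
    (hgM : ∀ t > 0, g t ≤ M / t) (hl : 0 < l) :
    ∫⁻ t in Ioi 0, ENNReal.ofReal (g t * (l * t * exp (-(l * t)))) ≤ ENNReal.ofReal M := by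
  calc ∫⁻ t in Ioi 0, ENNReal.ofReal (g t * (l * t * exp (-(l * t))))
      ≤ ∫⁻ t in Ioi 0, ENNReal.ofReal (M * l * exp (-(l * t))) := by
        refine setLIntegral_mono' measurableSet_Ioi fun t (ht : 0 < t) =>
          ENNReal.ofReal_le_ofReal ?_
        calc g t * (l * t * exp (-(l * t))) ≤ M / t * (l * t * exp (-(l * t))) :=
              mul_le_mul_of_nonneg_right (hgM t ht) (by positivity)
          _ = M * l * exp (-(l * t)) := by field_simp
    _ = ENNReal.ofReal M := by
        rw [lintegral_Ioi_ofReal_mul_exp_neg_mul (by positivity) hl]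
        field_simp
        simp

lemma le_toReal_lintegral_ofReal_mul_exp_neg_mul {c T δ : ℝ} (hg1 : ∀ t, g t ≤ 1)
    (hgc : ∀ t ≥ T, c / t ≤ g t) (hc : 0 ≤ c) (hT : 0 < T) (hl : 0 < l)
    (hTδ : T ≤ δ / l) :
    c * exp (-δ) * log (δ / T / l) ≤
      (∫⁻ t in Ioi 0, ENNReal.ofReal (g t * exp (-(l * t)))).toReal := by
  rw [← ENNReal.ofReal_le_iff_le_toReal (lintegral_ofReal_mul_exp_neg_mul_ne_top hg1 hl),
    div_right_comm, ← lintegral_Ioc_ofReal_div (by positivity) hT hTδ]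
  calc ∫⁻ t in Ioc T (δ / l), ENNReal.ofReal (c * exp (-δ) / t)
      ≤ ∫⁻ t in Ioc T (δ / l), ENNReal.ofReal (g t * exp (-(l * t))) := by
        refine setLIntegral_mono' measurableSet_Ioc fun t ht => ENNReal.ofReal_le_ofReal ?_
        have ht0 : 0 < t := hT.trans_le ht.1.le
        have hgt : c / t ≤ g t := hgc t ht.1.le
        have hlt : l * t ≤ δ := by rw [mul_comm]; exact (le_div_iff₀ hl).1 ht.2
        calc c * exp (-δ) / t = c / t * exp (-δ) := by ring
          _ ≤ g t * exp (-(l * t)) :=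
            mul_le_mul hgt (exp_le_exp.2 (by linarith)) (exp_pos _).le
              ((div_nonneg hc ht0.le).trans hgt)
    _ ≤ ∫⁻ t in Ioi 0, ENNReal.ofReal (g t * exp (-(l * t))) :=
        lintegral_mono_set (Ioc_subset_Ioi_self.trans (Ioi_subset_Ioi hT.le))

lemma toReal_lintegral_ofReal_mul_exp_neg_mul_le {c T : ℝ} (hg1 : ∀ t, g t ≤ 1)
    (hgc : ∀ t ≥ T, g t ≤ c / t) (hc : 0 ≤ c) (hT : 0 < T) (hl : 0 < l)
    (hlT : T ≤ 1 / l) :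
    (∫⁻ t in Ioi 0, ENNReal.ofReal (g t * exp (-(l * t)))).toReal ≤
      c * log (1 / T / l) + (T + c) := by
  have hexp_le_one {t : ℝ} (ht : 0 ≤ t) : exp (-(l * t)) ≤ 1 :=
    exp_le_one_iff.2 (neg_nonpos.2 (mul_nonneg hl.le ht))
  have hlog : 0 ≤ c * log (1 / l / T) := mul_nonneg hc (log_nonneg ((one_le_div hT).2 hlT))
  have hsmall : ∫⁻ t in Ioc 0 T, ENNReal.ofReal (g t * exp (-(l * t))) ≤ ENNReal.ofReal T :=
    calc ∫⁻ t in Ioc 0 T, ENNReal.ofReal (g t * exp (-(l * t)))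
        ≤ ∫⁻ _ in Ioc 0 T, 1 := setLIntegral_mono' measurableSet_Ioc fun t ht =>
          ENNReal.ofReal_le_one.2 (mul_le_one₀ (hg1 t) (exp_pos _).le (hexp_le_one ht.1.le))
      _ = ENNReal.ofReal T := by simp
  have hmiddle : ∫⁻ t in Ioc T (1 / l), ENNReal.ofReal (g t * exp (-(l * t))) ≤
      ENNReal.ofReal (c * log (1 / l / T)) := by
    rw [← lintegral_Ioc_ofReal_div hc hT hlT]
    refine setLIntegral_mono' measurableSet_Ioc fun t ht => ENNReal.ofReal_le_ofReal ?_
    have ht0 : 0 < t := hT.trans ht.1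
    exact (mul_le_mul_of_nonneg_right (hgc t ht.1.le) (exp_pos _).le).trans
      (mul_le_of_le_one_right (div_nonneg hc ht0.le) (hexp_le_one ht0.le))
  have hlarge :
      ∫⁻ t in Ioi (1 / l), ENNReal.ofReal (g t * exp (-(l * t))) ≤ ENNReal.ofReal c :=
    calc ∫⁻ t in Ioi (1 / l), ENNReal.ofReal (g t * exp (-(l * t)))
        ≤ ∫⁻ t in Ioi (1 / l), ENNReal.ofReal (c * l * exp (-(l * t))) := by
          refine setLIntegral_mono' measurableSet_Ioi fun t ht => ENNReal.ofReal_le_ofReal ?_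
          have hlt : 1 < l * t := by rw [mem_Ioi, div_lt_iff₀ hl, mul_comm] at ht; exact ht
          have ht0 : 0 < t := (by positivity : 0 < 1 / l).trans ht
          refine mul_le_mul_of_nonneg_right ((hgc t (hlT.trans ht.le)).trans ?_)
            (exp_pos _).le
          rw [div_le_iff₀ ht0, mul_assoc]
          exact le_mul_of_one_le_right hc hlt.le
      _ = ENNReal.ofReal (c * exp (-1)) := by
          rw [lintegral_Ioi_ofReal_mul_exp_neg_mul (by positivity) hl,
            mul_one_div_cancel hl.ne']
          field_simp
      _ ≤ ENNReal.ofReal c :=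
          ENNReal.ofReal_le_ofReal (mul_le_of_le_one_right hc (exp_le_one_iff.2 (by norm_num)))
  have hsplit : Ioi (0 : ℝ) = Ioc 0 T ∪ (Ioc T (1 / l) ∪ Ioi (1 / l)) := by
    rw [Ioc_union_Ioi_eq_Ioi hlT, Ioc_union_Ioi_eq_Ioi hT.le]
  refine ENNReal.toReal_le_of_le_ofReal (by rw [div_right_comm]; linarith) ?_
  calc ∫⁻ t in Ioi 0, ENNReal.ofReal (g t * exp (-(l * t)))
      ≤ (∫⁻ t in Ioc 0 T, ENNReal.ofReal (g t * exp (-(l * t)))) +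
          ((∫⁻ t in Ioc T (1 / l), ENNReal.ofReal (g t * exp (-(l * t)))) +
            ∫⁻ t in Ioi (1 / l), ENNReal.ofReal (g t * exp (-(l * t)))) := by
        rw [hsplit]
        exact (lintegral_union_le _ _ _).trans (add_le_add le_rfl (lintegral_union_le _ _ _))
    _ ≤ ENNReal.ofReal T + (ENNReal.ofReal (c * log (1 / l / T)) + ENNReal.ofReal c) :=
        add_le_add hsmall (add_le_add hmiddle hlarge)
    _ = ENNReal.ofReal (c * log (1 / T / l) + (T + c)) := by
        rw [← ENNReal.ofReal_add hlog hc, ← ENNReal.ofReal_add hT.le (by positivity),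
          div_right_comm]
        ring_nf

variable {C : ℝ}

lemma exists_nonneg_forall_le_div_of_tendsto (hg1 : ∀ t, g t ≤ 1)
    (htail : Tendsto (fun t => t * g t) atTop (𝓝 C)) :
    ∃ M, 0 ≤ M ∧ ∀ t > 0, g t ≤ M / t := by
  obtain ⟨T, hT⟩ := eventually_atTop.1 (htail.eventually (eventually_le_nhds (lt_add_one C)))
  refine ⟨max (max T (C + 1)) 0, le_max_right _ _, fun t ht => ?_⟩
  rw [le_div_iff₀ ht, mul_comm]
  rcases le_or_gt T t with hTt | htT
  · exact (hT t hTt).trans ((le_max_right _ _).trans (le_max_left _ _))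
  · calc t * g t ≤ t := mul_le_of_le_one_right ht.le (hg1 t)
      _ ≤ max (max T (C + 1)) 0 := htT.le.trans ((le_max_left _ _).trans (le_max_left _ _))

lemma tendsto_toReal_lintegral_ofReal_mul_mul_exp_neg_mul_div_neg_log (hg1 : ∀ t, g t ≤ 1)
    (htail : Tendsto (fun t => t * g t) atTop (𝓝 C)) :
    Tendsto (fun l => (∫⁻ t in Ioi 0, ENNReal.ofReal (g t * (l * t * exp (-(l * t))))).toReal /
      -log l) (𝓝[>] 0) (𝓝 0) := by
  obtain ⟨M, hM, hgM⟩ := exists_nonneg_forall_le_div_of_tendsto hg1 htail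
  refine tendsto_of_tendsto_of_tendsto_of_le_of_le' tendsto_const_nhds
    ((tendsto_const_nhds (x := M)).div_atTop tendsto_neg_log_nhdsGT_zero) ?_ ?_ <;>
    filter_upwards [self_mem_nhdsWithin, tendsto_neg_log_nhdsGT_zero.eventually_gt_atTop 0]
      with l (hl : 0 < l) hL
  · positivity
  · exact div_le_div_of_nonneg_right
      (ENNReal.toReal_le_of_le_ofReal hM (lintegral_ofReal_mul_mul_exp_neg_mul_le hM hgM hl))
      hL.le

lemma eventually_toReal_lintegral_ofReal_mul_exp_neg_mul_div_neg_log_lt (hg1 : ∀ t, g t ≤ 1)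
    (hC : 0 < C) (htail : Tendsto (fun t => t * g t) atTop (𝓝 C)) {b : ℝ} (hb : C < b) :
    ∀ᶠ l in 𝓝[>] 0,
      (∫⁻ t in Ioi 0, ENNReal.ofReal (g t * exp (-(l * t)))).toReal / -log l < b := by
  obtain ⟨c, hCc, hcb⟩ := exists_between hb
  obtain ⟨T, hT⟩ := eventually_atTop.1
    ((htail.eventually (eventually_le_nhds hCc)).and (eventually_gt_atTop 0))
  have hgc : ∀ t ≥ T, g t ≤ c / t := fun t ht => by
    rw [le_div_iff₀ (hT t ht).2, mul_comm]
    exact (hT t ht).1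
  replace hT : 0 < T := (hT T le_rfl).2
  filter_upwards [Ioo_mem_nhdsGT (by positivity : (0 : ℝ) < 1 / T),
    tendsto_neg_log_nhdsGT_zero.eventually_gt_atTop 0,
    (tendsto_mul_log_div_add_div_neg_log c (T + c) (by positivity : (0 : ℝ) < 1 / T)).eventually
      (eventually_lt_nhds hcb)] with l ⟨hl, hlT⟩ hL hlt
  refine lt_of_le_of_lt (div_le_div_of_nonneg_right ?_ hL.le) hlt
  exact toReal_lintegral_ofReal_mul_exp_neg_mul_le hg1 hgc (hC.trans hCc).le hT hl
    (by rw [le_div_iff₀ hl, mul_comm]; exact (lt_div_iff₀ hT).1 hlT |>.le)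

lemma eventually_lt_toReal_lintegral_ofReal_mul_exp_neg_mul_div_neg_log (hg1 : ∀ t, g t ≤ 1)
    (hC : 0 < C) (htail : Tendsto (fun t => t * g t) atTop (𝓝 C)) {a : ℝ} (ha : a < C) :
    ∀ᶠ l in 𝓝[>] 0,
      a < (∫⁻ t in Ioi 0, ENNReal.ofReal (g t * exp (-(l * t)))).toReal / -log l := by
  have hcont : Tendsto (fun ε => (C - ε) * exp (-ε)) (𝓝 0) (𝓝 C) := by
    have : Continuous fun ε : ℝ => (C - ε) * exp (-ε) := by fun_prop
    simpa using this.tendsto 0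
  -- `ε` also plays the role of `δ` in the lower bound `(C - ε) e^{-δ} log (δ/(λT))`.
  obtain ⟨ε, ⟨hεa, hεC⟩, hε⟩ := (((hcont.eventually_const_lt ha).and
    (eventually_lt_nhds hC)).filter_mono nhdsWithin_le_nhds |>.and
      (self_mem_nhdsWithin : Ioi (0 : ℝ) ∈ 𝓝[>] 0)).exists
  obtain ⟨T, hT⟩ := eventually_atTop.1 ((htail.eventually
    (eventually_ge_nhds (by linarith : C - ε < C))).and (eventually_gt_atTop 0))
  have hgc : ∀ t ≥ T, (C - ε) / t ≤ g t := fun t ht => by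
    rw [div_le_iff₀ (hT t ht).2, mul_comm]
    exact (hT t ht).1
  replace hT : 0 < T := (hT T le_rfl).2
  have hεT : 0 < ε / T := div_pos hε hT
  filter_upwards [Ioo_mem_nhdsGT hεT, tendsto_neg_log_nhdsGT_zero.eventually_gt_atTop 0,
    (tendsto_mul_log_div_add_div_neg_log ((C - ε) * exp (-ε)) 0 hεT).eventually
      (eventually_gt_nhds hεa)] with l ⟨hl, hlT⟩ hL hlt
  rw [add_zero] at hlt
  refine hlt.trans_le (div_le_div_of_nonneg_right ?_ hL.le)
  exact le_toReal_lintegral_ofReal_mul_exp_neg_mul hg1 hgc (by linarith) hT hl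
    (by rw [le_div_iff₀ hl, mul_comm]; exact (lt_div_iff₀ hT).1 hlT |>.le)

theorem tendsto_toReal_lintegral_ofReal_mul_exp_neg_mul_div_neg_log (hg1 : ∀ t, g t ≤ 1)
    (hC : 0 < C) (htail : Tendsto (fun t => t * g t) atTop (𝓝 C)) :
    Tendsto (fun l => (∫⁻ t in Ioi 0, ENNReal.ofReal (g t * exp (-(l * t)))).toReal / -log l)
      (𝓝[>] 0) (𝓝 C) :=
  tendsto_order.2
    ⟨fun _ ha => eventually_lt_toReal_lintegral_ofReal_mul_exp_neg_mul_div_neg_log hg1 hC htail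
      ha, fun _ hb => eventually_toReal_lintegral_ofReal_mul_exp_neg_mul_div_neg_log_lt hg1 hC
      htail hb⟩

end Abelian

section LayerCake

variable {α : Type*} [MeasurableSpace α] {μ : Measure α} {f : α → ℝ}

lemma aestronglyMeasurable_intervalIntegral_comp (hf : AEMeasurable f μ) {g : ℝ → ℝ}
    (hg : Continuous g) : AEStronglyMeasurable (fun ω => ∫ t in (0 : ℝ)..f ω, g t) μ :=
  ((intervalIntegral.continuous_primitive hg.intervalIntegrable 0).measurable
    |>.comp_aemeasurable hf).aestronglyMeasurable

lemma integral_intervalIntegral_comp_eq_toReal_lintegral [IsFiniteMeasure μ]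
    (hf0 : 0 ≤ᵐ[μ] f) (hf : AEMeasurable f μ) {g : ℝ → ℝ} (hg : Continuous g)
    (hg0 : ∀ t, 0 ≤ t → 0 ≤ g t) :
    ∫ ω, (∫ t in (0 : ℝ)..f ω, g t) ∂μ =
      (∫⁻ t in Ioi 0, ENNReal.ofReal ((μ {ω | t < f ω}).toReal * g t)).toReal := by
  rw [integral_eq_lintegral_of_nonneg_ae (hf0.mono fun ω (hω : 0 ≤ f ω) =>
      intervalIntegral.integral_nonneg hω fun t ht => hg0 t ht.1)
      (aestronglyMeasurable_intervalIntegral_comp hf hg),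
    lintegral_comp_eq_lintegral_meas_lt_mul μ hf0 hf (fun t _ => hg.intervalIntegrable 0 t)
      ((ae_restrict_iff' measurableSet_Ioi).2 (ae_of_all _ fun t ht => hg0 t (le_of_lt ht)))]
  congr 1
  refine lintegral_congr fun t => ?_
  rw [ENNReal.ofReal_mul ENNReal.toReal_nonneg, ENNReal.ofReal_toReal (measure_ne_top μ _)]

lemma integral_mul_exp_neg_mul_eq_sub [IsFiniteMeasure μ] (hf0 : 0 ≤ᵐ[μ] f)
    (hf : AEMeasurable f μ) {l : ℝ} (hl : 0 < l) :
    ∫ ω, f ω * exp (-(l * f ω)) ∂μ =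
      (∫⁻ t in Ioi 0, ENNReal.ofReal ((μ {ω | t < f ω}).toReal * exp (-(l * t)))).toReal -
      (∫⁻ t in Ioi 0,
        ENNReal.ofReal ((μ {ω | t < f ω}).toReal * (l * t * exp (-(l * t))))).toReal := by
  set A := fun u => ∫ t in (0 : ℝ)..u, exp (-(l * t))
  set B := fun u => ∫ t in (0 : ℝ)..u, l * t * exp (-(l * t))
  have hAB (u : ℝ) : A u - B u = u * exp (-(l * u)) := by
    rw [← integral_exp_neg_mul_sub_mul_mul_exp_neg_mul, intervalIntegral.integral_sub]
    all_goals exact (by fun_prop : Continuous _).intervalIntegrable _ _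
  have hB_nonneg {u : ℝ} (hu : 0 ≤ u) : 0 ≤ B u :=
    intervalIntegral.integral_nonneg hu fun t ht => by have := ht.1; positivity
  have hB_le_A {u : ℝ} (hu : 0 ≤ u) : B u ≤ A u := by
    have : 0 ≤ u * exp (-(l * u)) := by positivity
    linarith [hAB u]
  have hA_le (u : ℝ) : A u ≤ 1 / l := by
    simp only [A, integral_exp_neg_mul hl.ne']
    gcongr
    linarith [exp_pos (-(l * u))]
  have hAint : Integrable (fun ω => A (f ω)) μ :=
    Integrable.of_bound (aestronglyMeasurable_intervalIntegral_comp hf (by fun_prop)) (1 / l)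
      (hf0.mono fun ω (hω : 0 ≤ f ω) => by
        rw [norm_of_nonneg ((hB_nonneg hω).trans (hB_le_A hω))]; exact hA_le _)
  have hBint : Integrable (fun ω => B (f ω)) μ :=
    Integrable.of_bound (aestronglyMeasurable_intervalIntegral_comp hf (by fun_prop)) (1 / l)
      (hf0.mono fun ω (hω : 0 ≤ f ω) => by
        rw [norm_of_nonneg (hB_nonneg hω)]; exact (hB_le_A hω).trans (hA_le _))
  calc ∫ ω, f ω * exp (-(l * f ω)) ∂μ = ∫ ω, (A (f ω) - B (f ω)) ∂μ := by
        simp only [hAB]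
    _ = ∫ ω, A (f ω) ∂μ - ∫ ω, B (f ω) ∂μ := integral_sub hAint hBint
    _ = _ := by
      rw [integral_intervalIntegral_comp_eq_toReal_lintegral hf0 hf (by fun_prop)
          fun t _ => (exp_pos _).le,
        integral_intervalIntegral_comp_eq_toReal_lintegral hf0 hf (by fun_prop)
          fun t ht => by positivity]

end LayerCake

theorem stmt9 {Ω : Type*} [MeasurableSpace Ω] (μ : Measure Ω) [IsProbabilityMeasure μ]
    (U : Ω → ℝ) (hU : Measurable U) (hU0 : ∀ ω, 0 ≤ U ω) (C : ℝ) (hC : 0 < C)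
    (htail : Tendsto (fun t => t * (μ {ω | t < U ω}).toReal) atTop (nhds C)) :
    Tendsto (fun l : ℝ => (∫ ω, U ω * Real.exp (-(l * U ω)) ∂μ) / (-Real.log l))
      (nhdsWithin 0 (Ioi 0)) (nhds C) := by
  have hg1 (t : ℝ) : (μ {ω | t < U ω}).toReal ≤ 1 := measureReal_le_one
  have hlim := (tendsto_toReal_lintegral_ofReal_mul_exp_neg_mul_div_neg_log hg1 hC htail).sub
    (tendsto_toReal_lintegral_ofReal_mul_mul_exp_neg_mul_div_neg_log hg1 htail)
  rw [sub_zero] at hlim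
  refine hlim.congr' ?_
  filter_upwards [self_mem_nhdsWithin] with l (hl : 0 < l)
  rw [integral_mul_exp_neg_mul_eq_sub (ae_of_all _ hU0) hU.aemeasurable hl, sub_div]
end

section
/- Define G : [1,∞) → ℝ by G(t) = (1 + ε sin(log t))/t with ε = 0.0001. Then G is nonincreasing on [1,∞), tends to 0 at infinity, G(1) ≤ 1, and t·G(t) does not converge as t → ∞ (its limsup is 1 + ε and its liminf is 1 - ε). -/
/-!
`t * G t = 1 + ε sin (log t)` for `t > 0`; it stays in `[1 - ε, 1 + ε]` and attains both ends
along `t = exp (± π / 2 + 2πn)`, so its limsup and liminf differ. Monotonicity: the numerator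
of `G' t = (ε cos (log t) - 1 - ε sin (log t)) / t²` is at most `2|ε| - 1 ≤ 0`.
-/

open Real Filter Set

section LimsupLiminf

variable {α β : Type*} [ConditionallyCompleteLinearOrder β] {l : Filter α} {u : α → β}
  {a : β}

theorem limsup_eq_of_eventually_le_of_frequently_ge (hle : ∀ᶠ x in l, u x ≤ a)
    (hge : ∃ᶠ x in l, a ≤ u x) : limsup u l = a :=
  le_antisymm (limsup_le_of_le (.of_frequently_ge hge) hle)
    (le_limsup_of_frequently_le hge ⟨a, hle⟩)

theorem liminf_eq_of_eventually_ge_of_frequently_le (hge : ∀ᶠ x in l, a ≤ u x)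
    (hle : ∃ᶠ x in l, u x ≤ a) : liminf u l = a :=
  le_antisymm (liminf_le_of_frequently_le hle ⟨a, hge⟩)
    (le_liminf_of_le (.of_frequently_le hle) hge)

end LimsupLiminf

theorem Real.abs_mul_sin_le (ε x : ℝ) : |ε * sin x| ≤ |ε| := by
  rw [abs_mul]; exact mul_le_of_le_one_right (abs_nonneg ε) (abs_sin_le_one x)

theorem Real.abs_mul_cos_le (ε x : ℝ) : |ε * cos x| ≤ |ε| := by
  rw [abs_mul]; exact mul_le_of_le_one_right (abs_nonneg ε) (abs_cos_le_one x)

theorem Real.frequently_sin_eq_one : ∃ᶠ x in atTop, sin x = 1 := by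
  refine frequently_atTop.2 fun b => ⟨π / 2 + ⌈b⌉₊ * (2 * π), ?_, ?_⟩
  · nlinarith [Nat.le_ceil b, pi_gt_three, Nat.cast_nonneg (α := ℝ) ⌈b⌉₊]
  · rw [sin_add_nat_mul_two_pi, sin_pi_div_two]

theorem Real.frequently_sin_eq_neg_one : ∃ᶠ x in atTop, sin x = -1 :=
  (tendsto_atTop_add_const_right _ π tendsto_id).frequently
    (frequently_sin_eq_one.mono fun x hx => by rw [id, sin_add_pi, hx])

theorem Real.frequently_sin_log_eq {c : ℝ} (h : ∃ᶠ x in atTop, sin x = c) :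
    ∃ᶠ t in atTop, sin (log t) = c :=
  tendsto_exp_atTop.frequently (h.mono fun x hx => by rwa [log_exp])

section SinLog

variable {ε : ℝ}

theorem limsup_one_add_mul_sin_log (hε : 0 ≤ ε) :
    limsup (fun t => 1 + ε * sin (log t)) atTop = 1 + ε :=
  limsup_eq_of_eventually_le_of_frequently_ge
    (.of_forall fun t => by nlinarith [sin_le_one (log t)])
    ((frequently_sin_log_eq frequently_sin_eq_one).mono fun t ht => by rw [ht, mul_one])

theorem liminf_one_add_mul_sin_log (hε : 0 ≤ ε) :
    liminf (fun t => 1 + ε * sin (log t)) atTop = 1 - ε :=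
  liminf_eq_of_eventually_ge_of_frequently_le
    (.of_forall fun t => by nlinarith [neg_one_le_sin (log t)])
    ((frequently_sin_log_eq frequently_sin_eq_neg_one).mono fun t ht => by
      rw [ht]; linarith)

theorem tendsto_one_add_mul_sin_log_div_atTop (ε : ℝ) :
    Tendsto (fun t => (1 + ε * sin (log t)) / t) atTop (nhds 0) := by
  simp only [div_eq_mul_inv]
  refine isBoundedUnder_le_mul_tendsto_zero
    ⟨1 + |ε|, eventually_map.2 (.of_forall fun t => ?_)⟩ tendsto_inv_atTop_zero
  calc |1 + ε * sin (log t)| ≤ |1| + |ε * sin (log t)| := abs_add_le _ _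
    _ ≤ 1 + |ε| := by rw [abs_one]; linarith [abs_mul_sin_le ε (log t)]

theorem hasDerivAt_one_add_mul_sin_log_div {t : ℝ} (ht : 0 < t) :
    HasDerivAt (fun t => (1 + ε * sin (log t)) / t)
      ((ε * cos (log t) - (1 + ε * sin (log t))) / t ^ 2) t := by
  have hnum : HasDerivAt (fun t => 1 + ε * sin (log t)) (ε * (cos (log t) * t⁻¹)) t :=
    (((hasDerivAt_log ht.ne').sin).const_mul ε).const_add 1
  refine (hnum.fun_div (hasDerivAt_id' t) ht.ne').congr_deriv ?_
  field_simp

theorem antitoneOn_one_add_mul_sin_log_div (hε : |ε| ≤ 1 / 2) :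
    AntitoneOn (fun t => (1 + ε * sin (log t)) / t) (Ioi 0) := by
  have hderiv := fun t (ht : t ∈ Ioi (0 : ℝ)) =>
    hasDerivAt_one_add_mul_sin_log_div (ε := ε) ht
  refine antitoneOn_of_deriv_nonpos (convex_Ioi 0)
    (fun t ht => (hderiv t ht).continuousAt.continuousWithinAt)
    (fun t ht => (hderiv t (interior_subset ht)).differentiableAt.differentiableWithinAt)
    fun t ht => ?_
  rw [interior_Ioi] at ht
  rw [(hderiv t ht).deriv]
  have hcos : ε * cos (log t) ≤ |ε| := (le_abs_self _).trans (abs_mul_cos_le ε _)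
  have hsin : -|ε| ≤ ε * sin (log t) := neg_le_of_abs_le (abs_mul_sin_le ε _)
  exact div_nonpos_of_nonpos_of_nonneg (by linarith) (sq_nonneg t)

end SinLog

theorem stmt10 :
    let ε : ℝ := 0.0001
    let G : ℝ → ℝ := fun t => (1 + ε * Real.sin (Real.log t)) / t
    AntitoneOn G (Ici (1:ℝ)) ∧ Tendsto G atTop (nhds 0) ∧ G 1 ≤ 1 ∧
      (¬ ∃ L : ℝ, Tendsto (fun t => t * G t) atTop (nhds L)) ∧
      Filter.limsup (fun t => t * G t) atTop = 1 + ε ∧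
      Filter.liminf (fun t => t * G t) atTop = 1 - ε := by
  intro ε G
  have hε : 0 ≤ ε := by norm_num [ε]
  have hG : (fun t => t * G t) =ᶠ[atTop] fun t => 1 + ε * sin (log t) :=
    (eventually_ne_atTop 0).mono fun t ht => mul_div_cancel₀ _ ht
  have hlimsup : limsup (fun t => t * G t) atTop = 1 + ε :=
    (limsup_congr hG).trans (limsup_one_add_mul_sin_log hε)
  have hliminf : liminf (fun t => t * G t) atTop = 1 - ε :=
    (liminf_congr hG).trans (liminf_one_add_mul_sin_log hε)
  refine ⟨(antitoneOn_one_add_mul_sin_log_div (by norm_num [ε, abs_of_pos])).mono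
      (Ici_subset_Ioi.2 one_pos), tendsto_one_add_mul_sin_log_div_atTop ε, by simp [G],
      ?_, hlimsup, hliminf⟩
  rintro ⟨L, hL⟩
  have h : 1 + ε = 1 - ε := by rw [← hlimsup, ← hliminf, hL.limsup_eq, hL.liminf_eq]
  norm_num [ε] at h
end

section
/- Let c > 0 and let U be a random variable with U > 0 a.s. and E[|log U|] < ∞. Then lim_{λ → 0⁺} (1/(-log λ)) ∫_0^∞ E[exp(-λ e^{c x} U)] dx = 1/c. -/
/-!
For `a > 0` the integral `I(a) = ∫₀^∞ exp(-a e^{cx}) dx` stays within `1/c` of `max(0, -log a)/c`: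
below `x₀ = max(0, -log a)/c` the integrand lies between `1 - a e^{cx}` and `1`, beyond `x₀` it is
at most `e^{-c(x - x₀)}`. For `λ ≤ 1` we have `|max(0, -log λ - log U) + log λ| ≤ |log U|`, so by
Fubini `∫₀^∞ E[exp(-λ e^{cx} U)] dx = E[I(λU)]` differs from `-log λ / c` by at most
`(1 + E|log U|)/c`; dividing by `-log λ → ∞` gives the limit `1/c`.
-/

open MeasureTheory Real Filter Set Topology

lemma tendsto_one_div_mul_of_abs_sub_mul_le {α : Type*} {L : Filter α} {f g : α → ℝ} {k B : ℝ}
    (hg : Tendsto g L atTop) (hfg : ∀ᶠ x in L, |f x - g x * k| ≤ B) :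
    Tendsto (fun x => 1 / g x * f x) L (𝓝 k) := by
  have hB : Tendsto (fun x => B * (g x)⁻¹) L (𝓝 0) := by
    simpa using hg.inv_tendsto_atTop.const_mul B
  have hdiff : Tendsto (fun x => 1 / g x * f x - k) L (𝓝 0) := by
    refine squeeze_zero_norm' ?_ hB
    filter_upwards [hfg, hg.eventually_gt_atTop 0] with x hx hgx
    rw [Real.norm_eq_abs, show 1 / g x * f x - k = (f x - g x * k) * (g x)⁻¹ by field_simp,
      abs_mul, abs_inv, abs_of_pos hgx]
    gcongr
  simpa using hdiff.add_const k

lemma abs_max_zero_sub_sub_le {s t : ℝ} (hs : 0 ≤ s) : |max 0 (s - t) - s| ≤ |t| := by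
  rw [abs_le]
  constructor <;> rcases max_cases 0 (s - t) with ⟨h, _⟩ | ⟨h, _⟩ <;>
    rcases abs_cases t with ⟨h', _⟩ | ⟨h', _⟩ <;> linarith

section DoubleExponential

variable {c a : ℝ}

lemma integrableOn_exp_neg_mul_exp (hc : 0 < c) (ha : 0 < a) :
    IntegrableOn (fun x => exp (-(a * exp (c * x)))) (Ioi 0) := by
  refine Integrable.mono' ((exp_neg_integrableOn_Ioi 0 (mul_pos ha hc)).const_mul (exp (-a)))
    (by fun_prop : Measurable _).aestronglyMeasurable
    (ae_restrict_of_forall_mem measurableSet_Ioi fun x hx => ?_)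
  rw [Real.norm_of_nonneg (exp_pos _).le, ← exp_add, exp_le_exp]
  nlinarith [add_one_le_exp (c * x), mul_pos ha hc, mem_Ioi.1 hx]

lemma setIntegral_exp_neg_mul_exp_le (hc : 0 < c) (ha : 0 < a) :
    ∫ x in Ioi 0, exp (-(a * exp (c * x))) ≤ max 0 (-log a) / c + 1 / c := by
  set x0 := max 0 (-log a) / c
  have hx0 : 0 ≤ x0 := by positivity
  have hcx0 : -log a ≤ c * x0 := by
    rw [mul_div_cancel₀ _ hc.ne']
    exact le_max_right _ _
  have hint := integrableOn_exp_neg_mul_exp hc ha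
  rw [← Ioc_union_Ioi_eq_Ioi hx0, setIntegral_union (Ioc_disjoint_Ioi le_rfl) measurableSet_Ioi
    (hint.mono_set Ioc_subset_Ioi_self) (hint.mono_set (Ioi_subset_Ioi hx0))]
  have hhead : ∫ x in Ioc 0 x0, exp (-(a * exp (c * x))) ≤ x0 := by
    calc ∫ x in Ioc 0 x0, exp (-(a * exp (c * x)))
        ≤ ∫ _ in Ioc 0 x0, (1 : ℝ) :=
          setIntegral_mono_on (hint.mono_set Ioc_subset_Ioi_self)
            (integrableOn_const (by simp)) measurableSet_Ioc
            fun x _ => exp_le_one_iff.2 (neg_nonpos.2 (by positivity))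
      _ = x0 := by simp [hx0]
  have htail : ∫ x in Ioi x0, exp (-(a * exp (c * x))) ≤ 1 / c := by
    calc ∫ x in Ioi x0, exp (-(a * exp (c * x)))
        ≤ ∫ x in Ioi x0, exp (c * x0) * exp (-c * x) :=
          setIntegral_mono_on (hint.mono_set (Ioi_subset_Ioi hx0))
            ((integrableOn_exp_mul_Ioi (neg_lt_zero.2 hc) x0).const_mul _) measurableSet_Ioi
            fun x _ => by
              rw [← exp_add, exp_le_exp, ← exp_log ha, ← exp_add]
              nlinarith [add_one_le_exp (log a + c * x)]
      _ = 1 / c := by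
          rw [integral_const_mul, integral_exp_mul_Ioi (neg_lt_zero.2 hc), neg_div_neg_eq,
            ← mul_div_assoc, ← exp_add]
          simp
  linarith

lemma le_setIntegral_exp_neg_mul_exp (hc : 0 < c) (ha : 0 < a) :
    max 0 (-log a) / c - 1 / c ≤ ∫ x in Ioi 0, exp (-(a * exp (c * x))) := by
  set x0 := max 0 (-log a) / c
  have hx0 : 0 ≤ x0 := by positivity
  have hint := integrableOn_exp_neg_mul_exp hc ha
  have hax0 : a * exp (c * x0) ≤ 1 + a := by
    rw [mul_div_cancel₀ _ hc.ne']
    rcases max_cases 0 (-log a) with ⟨h, _⟩ | ⟨h, _⟩ <;> rw [h]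
    · simp
    · rw [exp_neg, exp_log ha, mul_inv_cancel₀ ha.ne']
      linarith
  have hFTC : ∫ x in 0..x0, (1 - a * exp (c * x)) = x0 - a * exp (c * x0) / c + a / c := by
    rw [intervalIntegral.integral_eq_sub_of_hasDerivAt (f := fun x => x - a * exp (c * x) / c)
      (fun x _ => ?_)
      ((by fun_prop : Continuous fun x => 1 - a * exp (c * x)).intervalIntegrable _ _)]
    · simp
    · exact ((hasDerivAt_id' x).sub ((((hasDerivAt_id' x).const_mul c).exp.const_mul a).div_const
        c)).congr_deriv (by field_simp)
  calc x0 - 1 / c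
      ≤ ∫ x in 0..x0, (1 - a * exp (c * x)) := by
        have := div_le_div_of_nonneg_right hax0 hc.le
        rw [add_div] at this
        linarith
    _ ≤ ∫ x in Ioc 0 x0, exp (-(a * exp (c * x))) := by
        rw [intervalIntegral.integral_of_le hx0]
        exact setIntegral_mono_on
          (by fun_prop : Continuous fun x => 1 - a * exp (c * x)).integrableOn_Ioc
          (hint.mono_set Ioc_subset_Ioi_self) measurableSet_Ioc
          fun x _ => by linarith [add_one_le_exp (-(a * exp (c * x)))]
    _ ≤ ∫ x in Ioi 0, exp (-(a * exp (c * x))) :=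
        setIntegral_mono_set hint (.of_forall fun _ => (exp_pos _).le)
          Ioc_subset_Ioi_self.eventuallyLE

lemma abs_setIntegral_exp_neg_mul_exp_sub_le (hc : 0 < c) (ha : 0 < a) :
    |(∫ x in Ioi 0, exp (-(a * exp (c * x)))) - max 0 (-log a) / c| ≤ 1 / c := by
  rw [abs_sub_le_iff]
  constructor
  · linarith [setIntegral_exp_neg_mul_exp_le hc ha]
  · linarith [le_setIntegral_exp_neg_mul_exp hc ha]

end DoubleExponential

lemma abs_setIntegral_exp_neg_mul_exp_mul_sub_le {c l u : ℝ} (hc : 0 < c) (hl : 0 < l)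
    (hl1 : l ≤ 1) (hu : 0 < u) :
    |(∫ x in Ioi 0, exp (-(l * exp (c * x) * u))) - -log l / c| ≤ (1 + |log u|) / c := by
  have hI := abs_setIntegral_exp_neg_mul_exp_sub_le hc (mul_pos hl hu)
  rw [log_mul hl.ne' hu.ne', neg_add'] at hI
  have hmax := abs_max_zero_sub_sub_le (t := log u) (neg_nonneg.2 (log_nonpos hl.le hl1))
  have hcomm : ∀ x, l * exp (c * x) * u = l * u * exp (c * x) := fun x => mul_right_comm _ _ _
  simp only [hcomm]
  calc _ ≤ |(∫ x in Ioi 0, exp (-(l * u * exp (c * x)))) - max 0 (-log l - log u) / c|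
        + |max 0 (-log l - log u) / c - -log l / c| := abs_sub_le _ _ _
    _ ≤ 1 / c + |log u| / c := by
        rw [← sub_div, abs_div, abs_of_pos hc]
        gcongr
    _ = (1 + |log u|) / c := by ring

section Expectation

variable {Ω : Type*} [MeasurableSpace Ω] {μ : Measure Ω} {c l : ℝ} {U : Ω → ℝ}

lemma integrable_prod_exp_neg_mul_exp_mul [IsFiniteMeasure μ] (hc : 0 < c) (hl : 0 < l)
    (hl1 : l ≤ 1) (hU : Measurable U) (hUpos : ∀ᵐ ω ∂μ, 0 < U ω)
    (hlog : Integrable (fun ω => |log (U ω)|) μ) :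
    Integrable (fun p : ℝ × Ω => exp (-(l * exp (c * p.1) * U p.2)))
      ((volume.restrict (Ioi 0)).prod μ) := by
  have hm : Measurable fun p : ℝ × Ω => exp (-(l * exp (c * p.1) * U p.2)) := by fun_prop
  refine (integrable_prod_iff' hm.aestronglyMeasurable).2 ⟨?_, ?_⟩
  · filter_upwards [hUpos] with ω hω
    simpa only [mul_right_comm l (exp _) (U ω), IntegrableOn]
      using integrableOn_exp_neg_mul_exp hc (mul_pos hl hω)
  · refine Integrable.mono' (g := fun ω => |-log l / c| + (1 + |log (U ω)|) / c)
      ((integrable_const _).add (((integrable_const _).add hlog).div_const c))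
      hm.stronglyMeasurable.norm.integral_prod_left'.aestronglyMeasurable ?_
    filter_upwards [hUpos] with ω hω
    simp only [Real.norm_of_nonneg (exp_pos _).le]
    exact (norm_le_norm_add_norm_sub' _ (-log l / c)).trans <|
      add_le_add le_rfl (abs_setIntegral_exp_neg_mul_exp_mul_sub_le hc hl hl1 hω)

lemma abs_integral_exp_neg_mul_exp_mul_sub_le [IsProbabilityMeasure μ] (hc : 0 < c) (hl : 0 < l)
    (hl1 : l ≤ 1) (hU : Measurable U) (hUpos : ∀ᵐ ω ∂μ, 0 < U ω)
    (hlog : Integrable (fun ω => |log (U ω)|) μ) :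
    |(∫ x in Ioi 0, ∫ ω, exp (-(l * exp (c * x) * U ω)) ∂μ) - -log l / c|
      ≤ (1 + ∫ ω, |log (U ω)| ∂μ) / c := by
  have hprod := integrable_prod_exp_neg_mul_exp_mul hc hl hl1 hU hUpos hlog
  have hbound : ∀ᵐ ω ∂μ, |(∫ x in Ioi 0, exp (-(l * exp (c * x) * U ω))) - -log l / c|
      ≤ (1 + |log (U ω)|) / c := by
    filter_upwards [hUpos] with ω hω
    exact abs_setIntegral_exp_neg_mul_exp_mul_sub_le hc hl hl1 hω
  rw [integral_integral_swap (f := fun (x : ℝ) (ω : Ω) => exp (-(l * exp (c * x) * U ω))) hprod]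
  calc |(∫ ω, (∫ x in Ioi 0, exp (-(l * exp (c * x) * U ω))) ∂μ) - -log l / c|
      = |∫ ω, ((∫ x in Ioi 0, exp (-(l * exp (c * x) * U ω))) - -log l / c) ∂μ| := by
        rw [integral_sub hprod.integral_prod_right (integrable_const _), integral_const]
        simp
    _ ≤ ∫ ω, |(∫ x in Ioi 0, exp (-(l * exp (c * x) * U ω))) - -log l / c| ∂μ :=
        abs_integral_le_integral_abs
    _ ≤ ∫ ω, (1 + |log (U ω)|) / c ∂μ :=
        integral_mono_ae (hprod.integral_prod_right.sub (integrable_const _)).abs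
          (((integrable_const _).add hlog).div_const c) hbound
    _ = (1 + ∫ ω, |log (U ω)| ∂μ) / c := by
        rw [integral_div, integral_add (integrable_const _) hlog, integral_const]
        simp

end Expectation

theorem stmt12 {Ω : Type*} [MeasurableSpace Ω] (μ : Measure Ω) [IsProbabilityMeasure μ]
    (c : ℝ) (hc : 0 < c)
    (U : Ω → ℝ) (hU : Measurable U) (hUpos : ∀ᵐ ω ∂μ, 0 < U ω)
    (hlog : Integrable (fun ω => |Real.log (U ω)|) μ) :
    Tendsto (fun l : ℝ =>
        (1 / (-Real.log l)) * ∫ x in Ioi (0:ℝ), ∫ ω, Real.exp (-(l * Real.exp (c * x) * U ω)) ∂μ)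
      (nhdsWithin 0 (Ioi 0)) (nhds (1/c)) := by
  refine tendsto_one_div_mul_of_abs_sub_mul_le (B := (1 + ∫ ω, |log (U ω)| ∂μ) / c)
    (tendsto_neg_atBot_atTop.comp tendsto_log_nhdsGT_zero) ?_
  filter_upwards [Ioo_mem_nhdsGT zero_lt_one] with l ⟨hl, hl1⟩
  rw [← div_eq_mul_one_div]
  exact abs_integral_exp_neg_mul_exp_mul_sub_le hc hl hl1.le hU hUpos hlog
end

section
/- Let d ≥ 2 and for s,t ≥ 0 with s ≤ t define D(s,t) = |∫_{e^{-(t-s)}}^1 ∫_{-1}^1 (1-u²)^{(d-2)/2} · 2(c-u)/(1-2cu+c²) du dc|. Then there is a constant C > 0 (depending only on d) such that D(s,t) ≤ C (t - s) for all 0 ≤ s ≤ t. -/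
open Real Set MeasureTheory

/-!
Writing `1 - 2cu + c² = (c - u)² + (1 - u²)`, AM-GM gives
`|2(c - u)| / (1 - 2cu + c²) ≤ (1 - u²)^(-1/2)`, so the inner integral is bounded, uniformly
in `c`, by `∫₋₁¹ (1 - u²)^((d-3)/2)`, which is finite for `d ≥ 2`. The outer
integral runs over an interval of length `1 - e^{-(t-s)} ≤ t - s`.
-/

lemma abs_two_mul_div_sq_add_le {x y : ℝ} (hy : 0 < y) :
    |2 * x / (x ^ 2 + y)| ≤ (√y)⁻¹ := by
  have hsqrt : 0 < √y := sqrt_pos.2 hy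
  rw [abs_div, abs_of_pos (show 0 < x ^ 2 + y by positivity), div_le_iff₀ (by positivity),
    abs_mul, abs_two, ← div_eq_inv_mul, le_div_iff₀ hsqrt]
  nlinarith [sq_nonneg (|x| - √y), sq_abs x, sq_sqrt hy.le]

lemma abs_one_sub_sq_rpow_mul_div_le (e c : ℝ) {u : ℝ} (hu : u ∈ Ioo (-1 : ℝ) 1) :
    |(1 - u ^ 2) ^ e * (2 * (c - u) / (1 - 2 * c * u + c ^ 2))| ≤ (1 - u ^ 2) ^ (e - 1 / 2) := by
  have hy : 0 < 1 - u ^ 2 := by nlinarith [hu.1, hu.2]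
  have hden : 1 - 2 * c * u + c ^ 2 = (c - u) ^ 2 + (1 - u ^ 2) := by ring
  rw [abs_mul, abs_of_nonneg (rpow_nonneg hy.le e), rpow_sub hy, ← sqrt_eq_rpow, div_eq_mul_inv,
    hden]
  exact mul_le_mul_of_nonneg_left (abs_two_mul_div_sq_add_le hy) (rpow_nonneg hy.le e)

lemma intervalIntegrable_one_sub_sq_rpow {r : ℝ} (hr : -1 < r) :
    IntervalIntegrable (fun u : ℝ => (1 - u ^ 2) ^ r) volume (-1) 1 := by
  have hfactor : EqOn (fun u : ℝ => (1 + u) ^ r * (1 - u) ^ r) (fun u => (1 - u ^ 2) ^ r)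
      (uIcc (-1) 1) := by
    intro u hu
    rw [uIcc_of_le (by norm_num)] at hu
    show (1 + u) ^ r * (1 - u) ^ r = (1 - u ^ 2) ^ r
    rw [← mul_rpow (by linarith [hu.1]) (by linarith [hu.2])]
    ring_nf
  refine (IntervalIntegrable.trans (b := 0) ?_ ?_).congr (hfactor.mono uIoc_subset_uIcc)
  · have h : IntervalIntegrable (fun u : ℝ => (1 + u) ^ r) volume (-1) 0 := by
      simpa using (intervalIntegral.intervalIntegrable_rpow' hr (a := 0) (b := 1)).comp_add_left 1
    refine h.mul_continuousOn ?_
    exact ContinuousOn.rpow_const (by fun_prop) fun u hu => Or.inl (by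
      rw [uIcc_of_le (by norm_num)] at hu; linarith [hu.2])
  · have h : IntervalIntegrable (fun u : ℝ => (1 - u) ^ r) volume 0 1 := by
      simpa using
        ((intervalIntegral.intervalIntegrable_rpow' hr (a := 0) (b := 1)).comp_sub_left 1).symm
    refine h.continuousOn_mul ?_
    exact ContinuousOn.rpow_const (by fun_prop) fun u hu => Or.inl (by
      rw [uIcc_of_le (by norm_num)] at hu; linarith [hu.1])

lemma abs_integral_one_sub_sq_rpow_mul_div_le {e : ℝ} (he : -1 / 2 < e) (c : ℝ) :
    |∫ u in (-1 : ℝ)..1, (1 - u ^ 2) ^ e * (2 * (c - u) / (1 - 2 * c * u + c ^ 2))| ≤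
      ∫ u in (-1 : ℝ)..1, (1 - u ^ 2) ^ (e - 1 / 2) := by
  rw [← norm_eq_abs]
  refine intervalIntegral.norm_integral_le_of_norm_le (by norm_num) ?_
    (intervalIntegrable_one_sub_sq_rpow (by linarith))
  filter_upwards [volume.ae_ne 1] with u hu1 hu
  exact abs_one_sub_sq_rpow_mul_div_le e c ⟨hu.1, lt_of_le_of_ne hu.2 hu1⟩

theorem stmt14 (d : ℕ) (hd : 2 ≤ d) :
    ∃ C > (0:ℝ), ∀ s t : ℝ, 0 ≤ s → s ≤ t →
      |∫ c in Real.exp (-(t-s))..1, ∫ u in (-1:ℝ)..1,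
          (1 - u^2) ^ (((d:ℝ)-2)/2) * (2*(c-u)/(1-2*c*u+c^2))| ≤ C * (t - s) := by
  have he : -1 / 2 < ((d : ℝ) - 2) / 2 := by
    have : (2 : ℝ) ≤ d := by exact_mod_cast hd
    linarith
  set K := ∫ u in (-1 : ℝ)..1, (1 - u ^ 2) ^ (((d : ℝ) - 2) / 2 - 1 / 2)
  have hK : 0 ≤ K := intervalIntegral.integral_nonneg (by norm_num) fun u hu =>
    rpow_nonneg (by nlinarith [hu.1, hu.2]) _
  refine ⟨K + 1, by linarith, fun s t _ hst => ?_⟩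
  have hexp_le_one : exp (-(t - s)) ≤ 1 := exp_le_one_iff.2 (by linarith)
  have hexp : 1 - exp (-(t - s)) ≤ t - s := by linarith [add_one_le_exp (-(t - s))]
  rw [← norm_eq_abs]
  calc _ ≤ K * |1 - exp (-(t - s))| := intervalIntegral.norm_integral_le_of_norm_le_const
          fun c _ => abs_integral_one_sub_sq_rpow_mul_div_le he c
    _ ≤ (K + 1) * (t - s) := by rw [abs_of_nonneg (by linarith)]; nlinarith
end
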